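/- arXiv:1211.6693 — 4 statements merged into one kernel-verified Lean document; each statement's English description precedes it below -/
import Mathlib

section
/- Let (ξ₁, ξ₂) be a centered bivariate Gaussian vector with variances σ₁² and σ₂² and correlation ρ ∈ (0, 1). Then for any N₁, N₂ > 0 there exists α > 0 such that E{(1 + |ξ₁|^{N₁} + |ξ₂|^{N₂}) 1_{{ξ₁ ≥ u, ξ₂ < 0}}} = o(e^{−α u² − u²/(2σ₁²)}) as u → ∞. -/
/-!
Chernoff bound with a tilted exponent: for `t, c ≥ 0` the exponent `t (ξ₁ - u) - t c ξ₂`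
is nonnegative on `{ξ₁ ≥ u, ξ₂ < 0}`, and the weight is at most
`C (e^{ξ₁} + e^{-ξ₁} + e^{ξ₂} + e^{-ξ₂})`, so the expectation is bounded by four Gaussian
moment generating functions.
With `c = ρ σ₁ / σ₂` the variable `ξ₁ - c ξ₂` is uncorrelated with `ξ₂` and has variance
`w = σ₁² (1 - ρ²) < σ₁²`; the choice `t = u / w` then gives the bound `K e^{u - u² / (2w)}`.
-/

open MeasureTheory ProbabilityTheory Filter Real

open scoped NNReal

def axisDir : Fin 4 → ℝ × ℝ := ![(1, 0), (-1, 0), (0, 1), (0, -1)]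

lemma axisDir_bounds (i : Fin 4) :
    (axisDir i).1 ≤ 1 ∧ (axisDir i).1 * (axisDir i).2 = 0 ∧
      (axisDir i).1 ^ 2 ≤ 1 ∧ (axisDir i).2 ^ 2 ≤ 1 := by
  fin_cases i <;> norm_num [axisDir]

lemma one_add_abs_rpow_add_abs_rpow_le {N₁ N₂ : ℝ} (hN₁ : 0 ≤ N₁) (hN₂ : 0 ≤ N₂) :
    ∃ C, 0 ≤ C ∧ ∀ x y : ℝ,
      1 + |x| ^ N₁ + |y| ^ N₂ ≤ C * ∑ i, exp ((axisDir i).1 * x + (axisDir i).2 * y) := by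
  refine ⟨1 + N₁ ^ N₁ + N₂ ^ N₂, by positivity, fun x y => ?_⟩
  have habs {N : ℝ} (hN : 0 ≤ N) (z : ℝ) : |z| ^ N ≤ N ^ N * (exp z + exp (-z)) := by
    simpa using (rpow_abs_le_mul_exp_abs z hN one_ne_zero).trans
      (mul_le_mul_of_nonneg_left (by simpa using exp_abs_le z) (by positivity))
  have hone : 1 ≤ exp x + exp (-x) := (one_le_exp (abs_nonneg x)).trans (exp_abs_le x)
  simp only [Fin.sum_univ_four, axisDir, Matrix.cons_val, one_mul, neg_mul, zero_mul, add_zero,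
    zero_add]
  nlinarith [habs hN₁ x, habs hN₂ y, rpow_nonneg hN₁ N₁, rpow_nonneg hN₂ N₂, exp_pos x,
    exp_pos (-x), exp_pos y, exp_pos (-y)]

lemma weight_mul_indicator_le_sum_exp_tilt {Ω : Type*} {ξ₁ ξ₂ : Ω → ℝ} {N₁ N₂ C t c u : ℝ}
    (hC0 : 0 ≤ C) (hC : ∀ x y : ℝ,
      1 + |x| ^ N₁ + |y| ^ N₂ ≤ C * ∑ i, exp ((axisDir i).1 * x + (axisDir i).2 * y))
    (ht : 0 ≤ t) (hc : 0 ≤ c) (ω : Ω) :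
    (1 + |ξ₁ ω| ^ N₁ + |ξ₂ ω| ^ N₂) *
        Set.indicator {ω | u ≤ ξ₁ ω ∧ ξ₂ ω < 0} (fun _ => (1 : ℝ)) ω
      ≤ C * ∑ i, exp (t * (ξ₁ ω - u) - t * c * ξ₂ ω
          + ((axisDir i).1 * ξ₁ ω + (axisDir i).2 * ξ₂ ω)) := by
  by_cases hA : ω ∈ {ω | u ≤ ξ₁ ω ∧ ξ₂ ω < 0}
  · rw [Set.indicator_of_mem hA, mul_one]
    have hchernoff : 0 ≤ t * (ξ₁ ω - u) - t * c * ξ₂ ω := by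
      nlinarith [mul_nonneg ht (sub_nonneg.mpr hA.1), mul_nonneg ht hc, hA.2]
    refine (hC _ _).trans (mul_le_mul_of_nonneg_left (Finset.sum_le_sum fun i _ => ?_) hC0)
    exact exp_le_exp.mpr (by linarith)
  · rw [Set.indicator_of_notMem hA, mul_zero]
    positivity

lemma tilt_exponent_le {σ₁ σ₂ ρ w t u a b : ℝ} (hw : 0 < w) (htw : t * w = u) (hu : 0 ≤ u)
    (ha : a ≤ 1) (hab : a * b = 0) (ha2 : a ^ 2 ≤ 1) (hb2 : b ^ 2 ≤ 1) :
    -(t * u) + (t ^ 2 * w + 2 * t * a * w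
        + (a ^ 2 * σ₁ ^ 2 + 2 * a * b * (ρ * σ₁ * σ₂) + b ^ 2 * σ₂ ^ 2)) / 2
      ≤ (σ₁ ^ 2 + σ₂ ^ 2) / 2 + (-u ^ 2 / (2 * w) + u) := by
  have hu2 : u ^ 2 / (2 * w) = t * u / 2 := by rw [← htw]; field_simp
  have h1 : t ^ 2 * w = t * u := by rw [← htw]; ring
  have h2 : 2 * t * a * w = 2 * a * u := by rw [← htw]; ring
  have h3 : 2 * a * b * (ρ * σ₁ * σ₂) = 0 := by rw [mul_assoc 2, hab]; ring
  rw [neg_div, hu2, h1, h2, h3]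
  nlinarith [mul_le_mul_of_nonneg_right ha hu, mul_le_mul_of_nonneg_right ha2 (sq_nonneg σ₁),
    mul_le_mul_of_nonneg_right hb2 (sq_nonneg σ₂)]

lemma exp_tilt_eq (t u c a b x y : ℝ) :
    exp (t * (x - u) - t * c * y + (a * x + b * y)) =
      exp (-(t * u)) * exp ((t + a) * x + (b - t * c) * y) := by
  rw [← exp_add]; ring_nf

lemma tilt_quadratic_form {σ₁ σ₂ ρ c : ℝ} (hc : c * σ₂ = ρ * σ₁) (t a b : ℝ) :
    (t + a) ^ 2 * σ₁ ^ 2 + 2 * (t + a) * (b - t * c) * (ρ * σ₁ * σ₂) + (b - t * c) ^ 2 * σ₂ ^ 2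
      = t ^ 2 * (σ₁ ^ 2 * (1 - ρ ^ 2)) + 2 * t * a * (σ₁ ^ 2 * (1 - ρ ^ 2))
        + (a ^ 2 * σ₁ ^ 2 + 2 * a * b * (ρ * σ₁ * σ₂) + b ^ 2 * σ₂ ^ 2) := by
  linear_combination (t ^ 2 * (c * σ₂ - ρ * σ₁) - 2 * t * a * ρ * σ₁ - 2 * b * t * σ₂) * hc

lemma isLittleO_exp_neg_mul_sq_add_self {a b : ℝ} (hba : b < a) :
    (fun u : ℝ => exp (-a * u ^ 2 + u)) =o[atTop] fun u => exp (-b * u ^ 2) := by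
  rw [isLittleO_exp_comp_exp_comp]
  have h : Tendsto (fun u : ℝ => u * ((a - b) * u - 1)) atTop atTop :=
    tendsto_id.atTop_mul_atTop₀
      (tendsto_atTop_add_const_right _ _ (tendsto_id.const_mul_atTop (sub_pos.mpr hba)))
  exact h.congr fun u => by ring

namespace ProbabilityTheory.HasLaw

variable {Ω : Type*} [MeasurableSpace Ω] {P : Measure Ω} {X : Ω → ℝ} {v : ℝ≥0}

lemma memLp_of_gaussianReal (hX : HasLaw X (gaussianReal 0 v) P) (p : ℝ≥0) :
    MemLp X p P := by
  have h := memLp_id_gaussianReal (μ := 0) (v := v) p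
  rwa [← hX.map_eq, memLp_map_measure_iff aestronglyMeasurable_id hX.aemeasurable] at h

lemma integral_sq_of_gaussianReal (hX : HasLaw X (gaussianReal 0 v) P) :
    ∫ ω, X ω ^ 2 ∂P = v := by
  have hmean : P[X] = 0 := by rw [hX.integral_eq, integral_id_gaussianReal]
  rw [← variance_of_integral_eq_zero hX.aemeasurable hmean, hX.variance_eq,
    variance_id_gaussianReal]

lemma integrable_exp_of_gaussianReal [IsProbabilityMeasure P]
    (hX : HasLaw X (gaussianReal 0 v) P) : Integrable (fun ω => exp (X ω)) P := by
  simpa using (mgf_pos_iff (t := 1)).mp (by rw [mgf_gaussianReal hX.map_eq]; exact exp_pos _)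

lemma integral_exp_of_gaussianReal (hX : HasLaw X (gaussianReal 0 v) P) :
    ∫ ω, exp (X ω) ∂P = exp ((∫ ω, X ω ^ 2 ∂P) / 2) := by
  simpa [mgf, hX.integral_sq_of_gaussianReal] using mgf_gaussianReal hX.map_eq 1

end ProbabilityTheory.HasLaw

section GaussianPair

variable {Ω : Type*} [MeasurableSpace Ω] {P : Measure Ω} {ξ₁ ξ₂ : Ω → ℝ}

lemma integral_linear_comb_sq (h₁ : MemLp ξ₁ 2 P) (h₂ : MemLp ξ₂ 2 P) (a b : ℝ) :
    ∫ ω, (a * ξ₁ ω + b * ξ₂ ω) ^ 2 ∂P =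
      a ^ 2 * ∫ ω, ξ₁ ω ^ 2 ∂P + 2 * a * b * ∫ ω, ξ₁ ω * ξ₂ ω ∂P
        + b ^ 2 * ∫ ω, ξ₂ ω ^ 2 ∂P := by
  have i₁ := h₁.integrable_sq.const_mul (a ^ 2)
  have i₁₂ : Integrable (fun ω => 2 * a * b * (ξ₁ ω * ξ₂ ω)) P :=
    (h₁.integrable_mul h₂).const_mul _
  have i₂ := h₂.integrable_sq.const_mul (b ^ 2)
  calc ∫ ω, (a * ξ₁ ω + b * ξ₂ ω) ^ 2 ∂P
      = ∫ ω, a ^ 2 * ξ₁ ω ^ 2 + 2 * a * b * (ξ₁ ω * ξ₂ ω) + b ^ 2 * ξ₂ ω ^ 2 ∂P := by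
        congr with ω; ring
    _ = _ := by
        rw [integral_add (i₁.fun_add i₁₂) i₂, integral_add i₁ i₁₂, integral_const_mul,
          integral_const_mul, integral_const_mul]

def IsCenteredGaussianPair (P : Measure Ω) (ξ₁ ξ₂ : Ω → ℝ) : Prop :=
  ∀ a b : ℝ, ∃ w : ℝ≥0, P.map (fun ω => a * ξ₁ ω + b * ξ₂ ω) = gaussianReal 0 w

namespace IsCenteredGaussianPair

lemma exists_hasLaw (h : IsCenteredGaussianPair P ξ₁ ξ₂) (a b : ℝ) :
    ∃ w : ℝ≥0, HasLaw (fun ω => a * ξ₁ ω + b * ξ₂ ω) (gaussianReal 0 w) P := by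
  obtain ⟨w, hw⟩ := h a b
  exact ⟨w, aemeasurable_of_map_neZero (by rw [hw]; infer_instance), hw⟩

lemma memLp_fst (h : IsCenteredGaussianPair P ξ₁ ξ₂) : MemLp ξ₁ 2 P := by
  obtain ⟨w, hw⟩ := h.exists_hasLaw 1 0
  simpa using hw.memLp_of_gaussianReal 2

lemma memLp_snd (h : IsCenteredGaussianPair P ξ₁ ξ₂) : MemLp ξ₂ 2 P := by
  obtain ⟨w, hw⟩ := h.exists_hasLaw 0 1
  simpa using hw.memLp_of_gaussianReal 2

lemma integrable_exp [IsProbabilityMeasure P] (h : IsCenteredGaussianPair P ξ₁ ξ₂) (a b : ℝ) :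
    Integrable (fun ω => exp (a * ξ₁ ω + b * ξ₂ ω)) P := by
  obtain ⟨w, hw⟩ := h.exists_hasLaw a b
  exact hw.integrable_exp_of_gaussianReal

lemma integral_exp (h : IsCenteredGaussianPair P ξ₁ ξ₂) (a b : ℝ) :
    ∫ ω, exp (a * ξ₁ ω + b * ξ₂ ω) ∂P =
      exp ((a ^ 2 * ∫ ω, ξ₁ ω ^ 2 ∂P + 2 * a * b * ∫ ω, ξ₁ ω * ξ₂ ω ∂P
        + b ^ 2 * ∫ ω, ξ₂ ω ^ 2 ∂P) / 2) := by
  obtain ⟨w, hw⟩ := h.exists_hasLaw a b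
  rw [hw.integral_exp_of_gaussianReal, integral_linear_comb_sq h.memLp_fst h.memLp_snd]

variable {σ₁ σ₂ ρ c N₁ N₂ : ℝ}

lemma integrable_exp_tilt [IsProbabilityMeasure P] (h : IsCenteredGaussianPair P ξ₁ ξ₂)
    (t u a b : ℝ) :
    Integrable (fun ω => exp (t * (ξ₁ ω - u) - t * c * ξ₂ ω + (a * ξ₁ ω + b * ξ₂ ω))) P := by
  simp only [exp_tilt_eq]
  exact (h.integrable_exp _ _).const_mul _

lemma integral_exp_tilt (h : IsCenteredGaussianPair P ξ₁ ξ₂)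
    (hvar₁ : ∫ ω, ξ₁ ω ^ 2 ∂P = σ₁ ^ 2) (hvar₂ : ∫ ω, ξ₂ ω ^ 2 ∂P = σ₂ ^ 2)
    (hcorr : ∫ ω, ξ₁ ω * ξ₂ ω ∂P = ρ * σ₁ * σ₂) (hc : c * σ₂ = ρ * σ₁) (t u a b : ℝ) :
    ∫ ω, exp (t * (ξ₁ ω - u) - t * c * ξ₂ ω + (a * ξ₁ ω + b * ξ₂ ω)) ∂P =
      exp (-(t * u) + (t ^ 2 * (σ₁ ^ 2 * (1 - ρ ^ 2)) + 2 * t * a * (σ₁ ^ 2 * (1 - ρ ^ 2))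
        + (a ^ 2 * σ₁ ^ 2 + 2 * a * b * (ρ * σ₁ * σ₂) + b ^ 2 * σ₂ ^ 2)) / 2) := by
  simp only [exp_tilt_eq]
  rw [integral_const_mul, h.integral_exp, hvar₁, hvar₂, hcorr, tilt_quadratic_form hc,
    ← exp_add]

lemma integral_weight_mul_indicator_le [IsProbabilityMeasure P]
    (h : IsCenteredGaussianPair P ξ₁ ξ₂) (hσ₁ : 0 < σ₁) (hσ₂ : 0 < σ₂) (hρ0 : 0 ≤ ρ)
    (hρ1 : ρ < 1) (hvar₁ : ∫ ω, ξ₁ ω ^ 2 ∂P = σ₁ ^ 2) (hvar₂ : ∫ ω, ξ₂ ω ^ 2 ∂P = σ₂ ^ 2)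
    (hcorr : ∫ ω, ξ₁ ω * ξ₂ ω ∂P = ρ * σ₁ * σ₂) (hN₁ : 0 ≤ N₁) (hN₂ : 0 ≤ N₂) :
    ∃ K, ∀ u, 0 ≤ u →
      ∫ ω, (1 + |ξ₁ ω| ^ N₁ + |ξ₂ ω| ^ N₂) *
          Set.indicator {ω | u ≤ ξ₁ ω ∧ ξ₂ ω < 0} (fun _ => (1 : ℝ)) ω ∂P
        ≤ K * exp (-u ^ 2 / (2 * (σ₁ ^ 2 * (1 - ρ ^ 2))) + u) := by
  obtain ⟨C, hC0, hC⟩ := one_add_abs_rpow_add_abs_rpow_le hN₁ hN₂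
  have hw : 0 < σ₁ ^ 2 * (1 - ρ ^ 2) := mul_pos (by positivity) (by nlinarith)
  set w := σ₁ ^ 2 * (1 - ρ ^ 2)
  set c := ρ * σ₁ / σ₂
  have hc : c * σ₂ = ρ * σ₁ := div_mul_cancel₀ _ hσ₂.ne'
  refine ⟨C * 4 * exp ((σ₁ ^ 2 + σ₂ ^ 2) / 2), fun u hu => ?_⟩
  set t := u / w
  have ht : 0 ≤ t := div_nonneg hu hw.le
  let tilted (i : Fin 4) (ω : Ω) : ℝ :=
    exp (t * (ξ₁ ω - u) - t * c * ξ₂ ω + ((axisDir i).1 * ξ₁ ω + (axisDir i).2 * ξ₂ ω))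
  have hint (i : Fin 4) : Integrable (tilted i) P := h.integrable_exp_tilt t u _ _
  have hpointwise (ω : Ω) : (1 + |ξ₁ ω| ^ N₁ + |ξ₂ ω| ^ N₂) *
      Set.indicator {ω | u ≤ ξ₁ ω ∧ ξ₂ ω < 0} (fun _ => (1 : ℝ)) ω ≤ C * ∑ i, tilted i ω :=
    weight_mul_indicator_le_sum_exp_tilt hC0 hC ht (by positivity) ω
  calc _ ≤ ∫ ω, C * ∑ i, tilted i ω ∂P := by
        refine integral_mono_of_nonneg (ae_of_all _ fun ω => ?_)
          ((integrable_finsetSum _ fun i _ => hint i).const_mul C) (ae_of_all _ hpointwise)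
        exact mul_nonneg (by positivity) (Set.indicator_nonneg (fun _ _ => zero_le_one) ω)
    _ = C * ∑ i, ∫ ω, tilted i ω ∂P := by
        rw [integral_const_mul, integral_finsetSum _ fun i _ => hint i]
    _ ≤ C * ∑ _i : Fin 4, exp ((σ₁ ^ 2 + σ₂ ^ 2) / 2) * exp (-u ^ 2 / (2 * w) + u) := by
        gcongr with i
        obtain ⟨ha, hab, ha2, hb2⟩ := axisDir_bounds i
        rw [h.integral_exp_tilt hvar₁ hvar₂ hcorr hc, ← exp_add]
        exact exp_le_exp.mpr (tilt_exponent_le hw (div_mul_cancel₀ _ hw.ne') hu ha hab ha2 hb2)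
    _ = _ := by
        rw [Finset.sum_const, Finset.card_univ, Fintype.card_fin, nsmul_eq_mul]
        push_cast
        ring

lemma isBigO_integral_weight_mul_indicator [IsProbabilityMeasure P]
    (h : IsCenteredGaussianPair P ξ₁ ξ₂) (hσ₁ : 0 < σ₁) (hσ₂ : 0 < σ₂) (hρ0 : 0 ≤ ρ)
    (hρ1 : ρ < 1) (hvar₁ : ∫ ω, ξ₁ ω ^ 2 ∂P = σ₁ ^ 2) (hvar₂ : ∫ ω, ξ₂ ω ^ 2 ∂P = σ₂ ^ 2)
    (hcorr : ∫ ω, ξ₁ ω * ξ₂ ω ∂P = ρ * σ₁ * σ₂) (hN₁ : 0 ≤ N₁) (hN₂ : 0 ≤ N₂) :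
    (fun u : ℝ => ∫ ω, (1 + |ξ₁ ω| ^ N₁ + |ξ₂ ω| ^ N₂) *
        Set.indicator {ω | u ≤ ξ₁ ω ∧ ξ₂ ω < 0} (fun _ => (1 : ℝ)) ω ∂P)
      =O[atTop] fun u => exp (-(1 / (2 * (σ₁ ^ 2 * (1 - ρ ^ 2)))) * u ^ 2 + u) := by
  obtain ⟨K, hK⟩ :=
    h.integral_weight_mul_indicator_le hσ₁ hσ₂ hρ0 hρ1 hvar₁ hvar₂ hcorr hN₁ hN₂
  refine Asymptotics.IsBigO.of_bound K ?_
  filter_upwards [eventually_ge_atTop 0] with u hu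
  rw [Real.norm_of_nonneg (integral_nonneg fun ω => mul_nonneg (by positivity)
      (Set.indicator_nonneg (fun _ _ => zero_le_one) ω)), Real.norm_of_nonneg (exp_pos _).le]
  convert hK u hu using 3
  ring

end IsCenteredGaussianPair

end GaussianPair

theorem gaussian_pair_opposite_tail_superexp_small_general
    {Ω : Type*} [MeasurableSpace Ω] (P : Measure Ω) [IsProbabilityMeasure P]
    (ξ₁ ξ₂ : Ω → ℝ)
    (hGauss : ∀ a b : ℝ, ∃ w : NNReal,
      Measure.map (fun ω => a * ξ₁ ω + b * ξ₂ ω) P = gaussianReal 0 w)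
    (σ₁ σ₂ ρ : ℝ) (hσ₁ : 0 < σ₁) (hσ₂ : 0 < σ₂) (hρ0 : 0 < ρ) (hρ1 : ρ < 1)
    (hvar₁ : ∫ ω, ξ₁ ω ^ 2 ∂P = σ₁ ^ 2)
    (hvar₂ : ∫ ω, ξ₂ ω ^ 2 ∂P = σ₂ ^ 2)
    (hcorr : ∫ ω, ξ₁ ω * ξ₂ ω ∂P = ρ * σ₁ * σ₂)
    (N₁ N₂ : ℝ) (hN₁ : 0 < N₁) (hN₂ : 0 < N₂) :
    ∃ α > 0,
      (fun u : ℝ =>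
          ∫ ω, (1 + |ξ₁ ω| ^ N₁ + |ξ₂ ω| ^ N₂) *
            Set.indicator {ω | u ≤ ξ₁ ω ∧ ξ₂ ω < 0} (fun _ => (1 : ℝ)) ω ∂P)
        =o[atTop] fun u : ℝ => Real.exp (-α * u ^ 2 - u ^ 2 / (2 * σ₁ ^ 2)) := by
  have hO := IsCenteredGaussianPair.isBigO_integral_weight_mul_indicator hGauss hσ₁ hσ₂ hρ0.le
    hρ1 hvar₁ hvar₂ hcorr hN₁.le hN₂.le
  set w := σ₁ ^ 2 * (1 - ρ ^ 2)
  have hw : 0 < w := mul_pos (by positivity) (by nlinarith)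
  have hgap : 1 / (2 * σ₁ ^ 2) < 1 / (2 * w) := by
    gcongr
    nlinarith [mul_pos (pow_pos hσ₁ 2) (pow_pos hρ0 2)]
  set α := (1 / (2 * w) - 1 / (2 * σ₁ ^ 2)) / 2 with hα
  refine ⟨α, by linarith, ?_⟩
  refine (hO.trans_isLittleO (isLittleO_exp_neg_mul_sq_add_self (b := α + 1 / (2 * σ₁ ^ 2))
    (by linarith))).congr_right fun u => ?_
  congr 1
  ring

/-- For a centered bivariate Gaussian vector with positive correlation `ρ ∈ (0,1)`,
`E{(1 + |ξ₁|^{N₁} + |ξ₂|^{N₂}) 1_{ξ₁ ≥ u, ξ₂ < 0}} = o(e^{−αu² − u²/(2σ₁²)})` as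
`u → ∞`, for some `α > 0`. -/
theorem gaussian_pair_opposite_tail_superexp_small
    {Ω : Type*} [MeasurableSpace Ω] (P : Measure Ω) [IsProbabilityMeasure P]
    (ξ₁ ξ₂ : Ω → ℝ) (hmeas₁ : Measurable ξ₁) (hmeas₂ : Measurable ξ₂)
    (hGauss : ∀ a b : ℝ, ∃ w : NNReal,
      Measure.map (fun ω => a * ξ₁ ω + b * ξ₂ ω) P = gaussianReal 0 w)
    (σ₁ σ₂ ρ : ℝ) (hσ₁ : 0 < σ₁) (hσ₂ : 0 < σ₂) (hρ0 : 0 < ρ) (hρ1 : ρ < 1)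
    (hvar₁ : ∫ ω, ξ₁ ω ^ 2 ∂P = σ₁ ^ 2)
    (hvar₂ : ∫ ω, ξ₂ ω ^ 2 ∂P = σ₂ ^ 2)
    (hcorr : ∫ ω, ξ₁ ω * ξ₂ ω ∂P = ρ * σ₁ * σ₂)
    (N₁ N₂ : ℝ) (hN₁ : 0 < N₁) (hN₂ : 0 < N₂) :
    ∃ α > 0,
      (fun u : ℝ =>
          ∫ ω, (1 + |ξ₁ ω| ^ N₁ + |ξ₂ ω| ^ N₂) *
            Set.indicator {ω | u ≤ ξ₁ ω ∧ ξ₂ ω < 0} (fun _ => (1 : ℝ)) ω ∂P)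
        =o[atTop] fun u : ℝ => Real.exp (-α * u ^ 2 - u ^ 2 / (2 * σ₁ ^ 2)) :=
  gaussian_pair_opposite_tail_superexp_small_general P ξ₁ ξ₂ hGauss σ₁ σ₂ ρ hσ₁ hσ₂ hρ0 hρ1 hvar₁
    hvar₂ hcorr N₁ N₂ hN₁ hN₂
end

section
/- Let (ξ₁, ξ₂) be a centered bivariate Gaussian vector with variances σ₁², σ₂² and correlation ρ ∈ (−1, 1) with ρ ≤ ρ̄ for some ρ̄ < 1. Then for any ε > 0 there exists a constant C such that for all large u, E{(ξ₁ ξ₂)^m 1_{{ξ₁ ≥ u, ξ₂ ≥ u}}} ≤ C exp(ε u² − u²/((1+ρ̄) max(σ₁,σ₂)²)) for any fixed positive integer m. -/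
/-!
Put `T = σ₂ ξ₁ + σ₁ ξ₂`, a centered Gaussian of variance `v = 2 (1 + ρ) σ₁² σ₂²`. On the event
`{ξ₁ ≥ u, ξ₂ ≥ u}` we have `T ≥ (σ₁ + σ₂) u` and, by AM-GM, `ξ₁ ξ₂ ≤ T² / (4 σ₁ σ₂)`, so for every
`γ ≥ 0` the integrand is at most `(4 σ₁ σ₂)⁻ᵐ e^{-γ (σ₁ + σ₂)² u²} T^{2m} e^{γ T²}`. The last factor
is integrable as soon as `2 γ v < 1`, and since `2 σ₁ σ₂ ≤ max σ₁ σ₂ (σ₁ + σ₂)` there is such a `γ`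
with `γ (σ₁ + σ₂)² ≥ 1 / ((1 + ρ̄) max σ₁ σ₂ ²) - ε`.
-/

open MeasureTheory ProbabilityTheory Filter Real
open scoped NNReal

lemma integrable_pow_mul_exp_neg_mul_sq {b : ℝ} (hb : 0 < b) (n : ℕ) :
    Integrable fun x : ℝ => x ^ n * exp (-b * x ^ 2) := by
  simpa [rpow_natCast] using
    integrable_rpow_mul_exp_neg_mul_sq hb (s := n) (by linarith [n.cast_nonneg (α := ℝ)])

lemma integrable_pow_mul_exp_mul_sq_gaussianReal (v : ℝ≥0) (n : ℕ) {β : ℝ}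
    (hβ : 2 * β * v < 1) :
    Integrable (fun x : ℝ => x ^ n * exp (β * x ^ 2)) (gaussianReal 0 v) := by
  rcases eq_or_ne v 0 with rfl | hv
  · rw [gaussianReal_zero_var]
    exact integrable_dirac enorm_lt_top
  have hv' : (0 : ℝ) < 2 * v := by positivity
  rw [gaussianReal_of_var_ne_zero _ hv, integrable_withDensity_iff (measurable_gaussianPDF _ _)
    (ae_of_all _ fun _ => gaussianPDF_lt_top)]
  have hb : 0 < (2 * (v : ℝ))⁻¹ - β := by
    rw [sub_pos, ← one_div, lt_div_iff₀ hv']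
    linarith
  refine ((integrable_pow_mul_exp_neg_mul_sq hb n).const_mul (√(2 * π * v))⁻¹).congr
    (ae_of_all _ fun x => ?_)
  have hexp : exp (-((2 * (v : ℝ))⁻¹ - β) * x ^ 2) =
      exp (β * x ^ 2) * exp (-x ^ 2 / (2 * v)) := by
    rw [← exp_add]
    ring_nf
  simp only [toReal_gaussianPDF, gaussianPDFReal, sub_zero, hexp]
  ring

lemma integral_sq_gaussianReal (v : ℝ≥0) : ∫ x, x ^ 2 ∂gaussianReal 0 v = v := by
  rw [← variance_of_integral_eq_zero aemeasurable_id' integral_id_gaussianReal,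
    variance_fun_id_gaussianReal]

lemma two_mul_mul_le_max_mul_add {a b : ℝ} (ha : 0 ≤ a) (hb : 0 ≤ b) :
    2 * a * b ≤ max a b * (a + b) := by
  nlinarith [le_max_left a b, le_max_right a b]

lemma exists_nonneg_two_mul_mul_lt_one_and_sub_le {v D s ε : ℝ} (hD : 0 < D) (hs : 0 < s)
    (hε : 0 < ε) (hvD : 2 * v ≤ D * s) :
    ∃ γ : ℝ, 0 ≤ γ ∧ 2 * γ * v < 1 ∧ D⁻¹ - ε ≤ γ * s := by
  set γ := max 0 (D⁻¹ - ε) / s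
  have hγs : γ * s = max 0 (D⁻¹ - ε) := div_mul_cancel₀ _ hs.ne'
  have hγ₀ : 0 ≤ γ := by positivity
  refine ⟨γ, hγ₀, ?_, hγs ▸ le_max_right _ _⟩
  calc 2 * γ * v ≤ γ * (D * s) := by nlinarith
    _ = max 0 (1 - D * ε) := by
      rw [mul_left_comm, hγs, mul_max_of_nonneg _ _ hD.le, mul_sub, mul_inv_cancel₀ hD.ne',
        mul_zero]
    _ < 1 := max_lt one_pos (by nlinarith)

lemma mul_pow_le_exp_mul_pow_mul_exp {a b γ u x y : ℝ} (ha : 0 < a) (hb : 0 < b) (hγ : 0 ≤ γ)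
    (hu : 0 ≤ u) (hx : u ≤ x) (hy : u ≤ y) (m : ℕ) :
    (x * y) ^ m ≤ ((4 * a * b)⁻¹) ^ m * exp (-γ * ((a + b) * u) ^ 2) *
      ((a * x + b * y) ^ (2 * m) * exp (γ * (a * x + b * y) ^ 2)) := by
  set z := a * x + b * y
  have hamgm : x * y ≤ (4 * a * b)⁻¹ * z ^ 2 := by
    rw [inv_mul_eq_div, le_div_iff₀ (by positivity)]
    nlinarith [sq_nonneg (a * x - b * y)]
  have hz : (a + b) * u ≤ z := by nlinarith
  have hexp : 1 ≤ exp (-γ * ((a + b) * u) ^ 2) * exp (γ * z ^ 2) := by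
    rw [← exp_add, one_le_exp_iff]
    nlinarith [pow_le_pow_left₀ (by positivity) hz 2]
  calc (x * y) ^ m ≤ ((4 * a * b)⁻¹ * z ^ 2) ^ m :=
        pow_le_pow_left₀ (by nlinarith) hamgm m
    _ = ((4 * a * b)⁻¹) ^ m * z ^ (2 * m) * 1 := by rw [mul_pow, pow_mul, mul_one]
    _ ≤ ((4 * a * b)⁻¹) ^ m * z ^ (2 * m) *
          (exp (-γ * ((a + b) * u) ^ 2) * exp (γ * z ^ 2)) := by
        gcongr
        exact mul_nonneg (by positivity) ((even_two_mul m).pow_nonneg z)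
    _ = _ := by ring

section LinearCombination

variable {Ω : Type*} [MeasurableSpace Ω] {P : Measure Ω} {ξ₁ ξ₂ : Ω → ℝ}

lemma integral_mul_add_mul_sq (h₁ : Integrable (fun ω => ξ₁ ω ^ 2) P)
    (h₂ : Integrable (fun ω => ξ₂ ω ^ 2) P) (h₁₂ : Integrable (fun ω => ξ₁ ω * ξ₂ ω) P)
    (a b : ℝ) :
    ∫ ω, (a * ξ₁ ω + b * ξ₂ ω) ^ 2 ∂P = a ^ 2 * ∫ ω, ξ₁ ω ^ 2 ∂P +
      2 * a * b * ∫ ω, ξ₁ ω * ξ₂ ω ∂P + b ^ 2 * ∫ ω, ξ₂ ω ^ 2 ∂P := by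
  have hexpand : ∀ ω, (a * ξ₁ ω + b * ξ₂ ω) ^ 2 =
      a ^ 2 * ξ₁ ω ^ 2 + 2 * a * b * (ξ₁ ω * ξ₂ ω) + b ^ 2 * ξ₂ ω ^ 2 := fun ω => by ring
  simp_rw [hexpand]
  rw [integral_add (by exact (h₁.const_mul _).add (h₁₂.const_mul _)) (h₂.const_mul _),
    integral_add (h₁.const_mul _) (h₁₂.const_mul _), integral_const_mul, integral_const_mul,
    integral_const_mul]

lemma exists_hasLaw_gaussianReal_mul_add_mul (hξ₁ : AEMeasurable ξ₁ P)
    (hξ₂ : AEMeasurable ξ₂ P)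
    (hGauss : ∀ a b : ℝ, ∃ w : ℝ≥0,
      Measure.map (fun ω => a * ξ₁ ω + b * ξ₂ ω) P = gaussianReal 0 w) (a b : ℝ) :
    ∃ v : ℝ≥0, HasLaw (fun ω => a * ξ₁ ω + b * ξ₂ ω) (gaussianReal 0 v) P ∧
      (v : ℝ) = a ^ 2 * ∫ ω, ξ₁ ω ^ 2 ∂P + 2 * a * b * ∫ ω, ξ₁ ω * ξ₂ ω ∂P +
        b ^ 2 * ∫ ω, ξ₂ ω ^ 2 ∂P := by
  have hlaw (a b : ℝ) : ∃ v : ℝ≥0,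
      HasLaw (fun ω => a * ξ₁ ω + b * ξ₂ ω) (gaussianReal 0 v) P :=
    (hGauss a b).imp fun _ hv => ⟨by fun_prop, hv⟩
  have hL2 (a b : ℝ) : MemLp (fun ω => a * ξ₁ ω + b * ξ₂ ω) 2 P :=
    let ⟨_, h⟩ := hlaw a b; h.hasGaussianLaw.memLp_two
  have h₁ : MemLp ξ₁ 2 P := by simpa using hL2 1 0
  have h₂ : MemLp ξ₂ 2 P := by simpa using hL2 0 1
  obtain ⟨v, hT⟩ := hlaw a b
  refine ⟨v, hT, ?_⟩
  rw [← integral_sq_gaussianReal, ← hT.integral_comp (by fun_prop), Function.comp_def,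
    integral_mul_add_mul_sq h₁.integrable_sq h₂.integrable_sq (h₁.integrable_mul h₂)]

lemma integral_pow_mul_indicator_le_of_hasLaw_gaussianReal {a b γ : ℝ} {v : ℝ≥0}
    (ha : 0 < a) (hb : 0 < b)
    (hT : HasLaw (fun ω => a * ξ₁ ω + b * ξ₂ ω) (gaussianReal 0 v) P)
    (hγ₀ : 0 ≤ γ) (hγ : 2 * γ * v < 1) (m : ℕ) {u : ℝ} (hu : 0 ≤ u) :
    ∫ ω, (ξ₁ ω * ξ₂ ω) ^ m * Set.indicator {ω | u ≤ ξ₁ ω ∧ u ≤ ξ₂ ω} (fun _ => (1 : ℝ)) ω ∂P ≤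
      ((4 * a * b)⁻¹) ^ m * (∫ x, x ^ (2 * m) * exp (γ * x ^ 2) ∂gaussianReal 0 v) *
        exp (-γ * ((a + b) * u) ^ 2) := by
  set T := fun ω => a * ξ₁ ω + b * ξ₂ ω
  have hK : Integrable (fun ω => T ω ^ (2 * m) * exp (γ * T ω ^ 2)) P := by
    have := integrable_pow_mul_exp_mul_sq_gaussianReal v (2 * m) hγ
    rw [← hT.map_eq] at this
    exact this.comp_aemeasurable hT.aemeasurable
  rw [← hT.integral_comp (by fun_prop), mul_right_comm, ← integral_const_mul]
  refine integral_mono_of_nonneg (ae_of_all _ fun ω => ?_) (hK.const_mul _)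
    (ae_of_all _ fun ω => ?_) <;>
  simp only [Set.indicator_apply, Set.mem_ofPred_eq, Function.comp_apply] <;>
  split_ifs with h
  · exact mul_nonneg (pow_nonneg (mul_nonneg (hu.trans h.1) (hu.trans h.2)) m) zero_le_one
  · simp
  · rw [mul_one]
    exact mul_pow_le_exp_mul_pow_mul_exp ha hb hγ₀ hu h.1 h.2 m
  · have := (even_two_mul m).pow_nonneg (T ω)
    rw [mul_zero]
    positivity

end LinearCombination

theorem gaussian_pair_joint_tail_bound_general
    {Ω : Type*} [MeasurableSpace Ω] (P : Measure Ω)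
    (ξ₁ ξ₂ : Ω → ℝ) (hmeas₁ : Measurable ξ₁) (hmeas₂ : Measurable ξ₂)
    (hGauss : ∀ a b : ℝ, ∃ w : NNReal,
      Measure.map (fun ω => a * ξ₁ ω + b * ξ₂ ω) P = gaussianReal 0 w)
    (σ₁ σ₂ ρ ρbar : ℝ) (hσ₁ : 0 < σ₁) (hσ₂ : 0 < σ₂)
    (hρlb : -1 < ρ) (hρub : ρ ≤ ρbar)
    (hvar₁ : ∫ ω, ξ₁ ω ^ 2 ∂P = σ₁ ^ 2)
    (hvar₂ : ∫ ω, ξ₂ ω ^ 2 ∂P = σ₂ ^ 2)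
    (hcorr : ∫ ω, ξ₁ ω * ξ₂ ω ∂P = ρ * σ₁ * σ₂)
    (m : ℕ) (ε : ℝ) (hε : 0 < ε) :
    ∃ C : ℝ, ∀ᶠ u in atTop,
      ∫ ω, (ξ₁ ω * ξ₂ ω) ^ m *
          Set.indicator {ω | u ≤ ξ₁ ω ∧ u ≤ ξ₂ ω} (fun _ => (1 : ℝ)) ω ∂P ≤
        C * Real.exp (ε * u ^ 2 - u ^ 2 / ((1 + ρbar) * max σ₁ σ₂ ^ 2)) := by
  obtain ⟨v, hT, hv⟩ := exists_hasLaw_gaussianReal_mul_add_mul hmeas₁.aemeasurable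
    hmeas₂.aemeasurable hGauss σ₂ σ₁
  rw [hvar₁, hvar₂, hcorr] at hv
  set D := (1 + ρbar) * max σ₁ σ₂ ^ 2
  have hρbar : 0 < 1 + ρbar := by linarith
  have hvD : 2 * v ≤ D * (σ₁ + σ₂) ^ 2 := by
    have := pow_le_pow_left₀ (by positivity) (two_mul_mul_le_max_mul_add hσ₁.le hσ₂.le) 2
    rw [hv]
    nlinarith [mul_le_mul_of_nonneg_left this hρbar.le, sq_nonneg (σ₁ * σ₂)]
  obtain ⟨γ, hγ₀, hγ, hγD⟩ :=
    exists_nonneg_two_mul_mul_lt_one_and_sub_le (by positivity) (by positivity) hε hvD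
  refine ⟨((4 * σ₂ * σ₁)⁻¹) ^ m * ∫ x, x ^ (2 * m) * exp (γ * x ^ 2) ∂gaussianReal 0 v,
    (eventually_ge_atTop 0).mono fun u hu =>
      (integral_pow_mul_indicator_le_of_hasLaw_gaussianReal hσ₂ hσ₁ hT hγ₀ hγ m hu).trans ?_⟩
  have hC : 0 ≤ ∫ x, x ^ (2 * m) * exp (γ * x ^ 2) ∂gaussianReal 0 v :=
    integral_nonneg fun x => mul_nonneg ((even_two_mul m).pow_nonneg x) (exp_pos _).le
  gcongr
  rw [add_comm σ₂, mul_pow, ← mul_assoc, div_eq_mul_inv]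
  nlinarith [sq_nonneg u]

/-- For a centered bivariate Gaussian vector with correlation `ρ ≤ ρ̄ < 1`, for any
`ε > 0` there is a constant `C` such that for all large `u`,
`E{(ξ₁ξ₂)^m 1_{ξ₁ ≥ u, ξ₂ ≥ u}} ≤ C exp(εu² − u²/((1+ρ̄) max(σ₁,σ₂)²))`. -/
theorem gaussian_pair_joint_tail_bound
    {Ω : Type*} [MeasurableSpace Ω] (P : Measure Ω) [IsProbabilityMeasure P]
    (ξ₁ ξ₂ : Ω → ℝ) (hmeas₁ : Measurable ξ₁) (hmeas₂ : Measurable ξ₂)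
    (hGauss : ∀ a b : ℝ, ∃ w : NNReal,
      Measure.map (fun ω => a * ξ₁ ω + b * ξ₂ ω) P = gaussianReal 0 w)
    (σ₁ σ₂ ρ ρbar : ℝ) (hσ₁ : 0 < σ₁) (hσ₂ : 0 < σ₂)
    (hρlb : -1 < ρ) (hρub : ρ ≤ ρbar) (hρbar : ρbar < 1)
    (hvar₁ : ∫ ω, ξ₁ ω ^ 2 ∂P = σ₁ ^ 2)
    (hvar₂ : ∫ ω, ξ₂ ω ^ 2 ∂P = σ₂ ^ 2)
    (hcorr : ∫ ω, ξ₁ ω * ξ₂ ω ∂P = ρ * σ₁ * σ₂)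
    (m : ℕ) (hm : 1 ≤ m) (ε : ℝ) (hε : 0 < ε) :
    ∃ C : ℝ, ∀ᶠ u in atTop,
      ∫ ω, (ξ₁ ω * ξ₂ ω) ^ m *
          Set.indicator {ω | u ≤ ξ₁ ω ∧ u ≤ ξ₂ ω} (fun _ => (1 : ℝ)) ω ∂P ≤
        C * Real.exp (ε * u ^ 2 - u ^ 2 / ((1 + ρbar) * max σ₁ σ₂ ^ 2)) :=
  gaussian_pair_joint_tail_bound_general P ξ₁ ξ₂ hmeas₁ hmeas₂ hGauss σ₁ σ₂ ρ ρbar hσ₁ hσ₂ hρlb hρub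
    hvar₁ hvar₂ hcorr m ε hε
end

section
/- Laplace method for an interior maximum: let T ⊂ R^N be compact, t₀ an interior point of T, g continuous on T with g(t₀) ≠ 0, h ∈ C²(T) attaining its unique minimum over T at t₀, with ∇h(t₀)=0 and ∇²h(t₀) positive definite. Then as u → ∞, ∫_T g(t) e^{−u h(t)} dt = (2π)^{N/2} u^{−N/2} (det ∇²h(t₀))^{−1/2} g(t₀) e^{−u h(t₀)} (1 + o(1)). -/
/-!
Substituting `t = t₀ + u^{-1/2} s` turns `u^{N/2} e^{u h(t₀)} ∫_T g e^{-u h}` into the integral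
of `g(t₀ + u^{-1/2} s) e^{-u (h(t₀ + u^{-1/2} s) - h(t₀))}` over `s`. By the second-order Taylor
expansion at the critical point `t₀`, the exponent tends to `-⟪s, ∇²h(t₀) s⟫ / 2`. The integrands
are dominated by `M e^{-c ‖s‖²}`, because `h - h(t₀)` grows at least quadratically on `T`:
by Taylor near `t₀`, and by a positive gap away from `t₀`, which exists by compactness and the
uniqueness of the minimizer. Dominated convergence and the Gaussian integral
`∫ e^{-⟪s, H s⟫ / 2} ds = (2π)^{N/2} (det H)^{-1/2}` give the claim.
-/

open MeasureTheory Filter Asymptotics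

open Topology Set Metric Module Matrix WithLp

section Taylor

variable {E F : Type*} [NormedAddCommGroup E] [NormedSpace ℝ E] [NormedAddCommGroup F]
  [NormedSpace ℝ F]

theorem isLittleO_sub_taylor_two {f : E → F} {f' : E → E →L[ℝ] F}
    {f'' : E →L[ℝ] E →L[ℝ] F} {x : E} (hf : ∀ᶠ y in 𝓝 x, HasFDerivAt f (f' y) y)
    (hx : HasFDerivAt f' f'' x) :
    (fun v => f (x + v) - f x - f' x v - (2 : ℝ)⁻¹ • f'' v v) =o[𝓝 0] fun v => ‖v‖ ^ 2 := by
  refine isLittleO_iff.2 fun ε hε => ?_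
  have hf₀ : ∀ᶠ w in 𝓝 (0 : E), HasFDerivAt f (f' (x + w)) (x + w) :=
    (continuous_const_add x).tendsto' 0 x (add_zero x) |>.eventually hf
  obtain ⟨r, hr, hball⟩ := eventually_nhds_iff_ball.1
    (hf₀.and ((hasFDerivAt_iff_isLittleO_nhds_zero.1 hx).def hε))
  refine eventually_nhds_iff_ball.2 ⟨r, hr, fun v hv => ?_⟩
  have hsub : closedBall (0 : E) ‖v‖ ⊆ ball 0 r :=
    closedBall_subset_ball (by simpa using hv)
  have hderiv : ∀ w ∈ closedBall (0 : E) ‖v‖,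
      HasFDerivWithinAt (fun w => f (x + w) - f' x w - (2 : ℝ)⁻¹ • f'' w w)
        (f' (x + w) - f' x - f'' w) (closedBall 0 ‖v‖) w := by
    intro w hw
    -- `f''` is symmetric, so `f'' w` is the derivative of `w ↦ f'' w w / 2`
    have hquad : HasFDerivAt (fun w => (2 : ℝ)⁻¹ • f'' w w) (f'' w) w := by
      have := ((f''.hasFDerivAt (x := w)).clm_apply (hasFDerivAt_id w)).const_smul (2 : ℝ)⁻¹
      refine this.congr_fderiv (ContinuousLinearMap.ext fun z => ?_)
      simp [second_derivative_symmetric_of_eventually hf hx z w, ← add_smul, ← two_mul]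
    exact (((hball w (hsub hw)).1.comp w ((hasFDerivAt_id w).const_add x)).sub
      (f' x).hasFDerivAt |>.sub hquad).hasFDerivWithinAt
  have hbound : ∀ w ∈ closedBall (0 : E) ‖v‖, ‖f' (x + w) - f' x - f'' w‖ ≤ ε * ‖v‖ := by
    intro w hw
    have hw' : ‖w‖ ≤ ‖v‖ := by simpa using hw
    calc ‖f' (x + w) - f' x - f'' w‖ ≤ ε * ‖w‖ := (hball w (hsub hw)).2
      _ ≤ ε * ‖v‖ := by gcongr
  have := (convex_closedBall (0 : E) ‖v‖).norm_image_sub_le_of_norm_hasFDerivWithin_le hderiv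
    hbound (mem_closedBall_self (norm_nonneg v)) (mem_closedBall_zero_iff.2 le_rfl)
  simp only [add_zero, map_zero, smul_zero, sub_zero] at this
  rw [norm_pow, norm_norm, sq, ← mul_assoc]
  convert this using 2
  abel

end Taylor

theorem isCoercive_of_pos {E : Type*} [NormedAddCommGroup E] [NormedSpace ℝ E]
    [FiniteDimensional ℝ E] (B : E →L[ℝ] E →L[ℝ] ℝ) (hB : ∀ v ≠ 0, 0 < B v v) :
    IsCoercive B := by
  rcases subsingleton_or_nontrivial E with hE | hE
  · exact ⟨1, one_pos, fun u => by simp [Subsingleton.elim u 0]⟩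
  obtain ⟨v₀, hv₀, hmin⟩ := (isCompact_sphere (0 : E) 1).exists_isMinOn
    (NormedSpace.sphere_nonempty.2 zero_le_one)
    (by fun_prop : Continuous fun v => B v v).continuousOn
  refine ⟨B v₀ v₀, hB v₀ (ne_zero_of_mem_unit_sphere ⟨v₀, hv₀⟩), fun u => ?_⟩
  rcases eq_or_ne u 0 with rfl | hu
  · simp
  have hu' : 0 < ‖u‖ := norm_pos_iff.2 hu
  have hw : ‖u‖⁻¹ • u ∈ sphere (0 : E) 1 := by
    simp [norm_smul, hu'.ne']
  calc B v₀ v₀ * ‖u‖ * ‖u‖ ≤ B (‖u‖⁻¹ • u) (‖u‖⁻¹ • u) * ‖u‖ * ‖u‖ := by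
        gcongr; exact hmin hw
    _ = B u u := by
        simp only [map_smul, _root_.smul_apply, smul_eq_mul]
        field_simp

section Growth

variable {E : Type*} [NormedAddCommGroup E] {h : E → ℝ} {t₀ : E}

theorem IsCoercive.eventually_mul_norm_sq_le [NormedSpace ℝ E] {B : E →L[ℝ] E →L[ℝ] ℝ}
    (hB : IsCoercive B)
    (htaylor : (fun v => h (t₀ + v) - h t₀ - B v v / 2) =o[𝓝 0] fun v => ‖v‖ ^ 2) :
    ∃ c > 0, ∀ᶠ v in 𝓝 0, c * ‖v‖ ^ 2 ≤ h (t₀ + v) - h t₀ := by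
  obtain ⟨C, hC, hCB⟩ := hB
  refine ⟨C / 4, by positivity, ?_⟩
  filter_upwards [htaylor.def (by positivity : 0 < C / 4)] with v hv
  rw [norm_pow, norm_norm, Real.norm_eq_abs] at hv
  nlinarith [(abs_le.1 hv).1, hCB v]

theorem IsCompact.exists_pos_le_sub_of_forall_lt {T : Set E} (hT : IsCompact T)
    (hh : ContinuousOn h T) (hmin : ∀ t ∈ T, t ≠ t₀ → h t₀ < h t) {r : ℝ} (hr : 0 < r) :
    ∃ δ > 0, ∀ t ∈ T, r ≤ ‖t - t₀‖ → δ ≤ h t - h t₀ := by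
  have hfar : ∀ t ∈ T, r ≤ ‖t - t₀‖ → t ∈ T \ ball t₀ r := fun t ht hrt =>
    ⟨ht, by simpa [dist_eq_norm] using hrt⟩
  rcases (T \ ball t₀ r).eq_empty_or_nonempty with hempty | hne
  · exact ⟨1, one_pos, fun t ht hrt => by simpa [hempty] using hfar t ht hrt⟩
  obtain ⟨tm, ⟨htmT, htm⟩, hmin'⟩ :=
    (hT.diff isOpen_ball).exists_isMinOn hne (hh.mono sdiff_subset)
  have htm₀ : tm ≠ t₀ := fun h => htm (h ▸ mem_ball_self hr)
  exact ⟨h tm - h t₀, sub_pos.2 (hmin tm htmT htm₀), fun t ht hrt =>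
    sub_le_sub_right (hmin' (hfar t ht hrt)) _⟩

theorem IsCompact.exists_pos_mul_norm_sub_sq_le [NormedSpace ℝ E] {T : Set E}
    (hT : IsCompact T) (hh : ContinuousOn h T) (hmin : ∀ t ∈ T, t ≠ t₀ → h t₀ < h t)
    {B : E →L[ℝ] E →L[ℝ] ℝ} (hB : IsCoercive B)
    (htaylor : (fun v => h (t₀ + v) - h t₀ - B v v / 2) =o[𝓝 0] fun v => ‖v‖ ^ 2) :
    ∃ c > 0, ∀ t ∈ T, c * ‖t - t₀‖ ^ 2 ≤ h t - h t₀ := by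
  obtain ⟨c, hc, hnear⟩ := hB.eventually_mul_norm_sq_le htaylor
  obtain ⟨r, hr, hball⟩ := eventually_nhds_iff_ball.1 hnear
  obtain ⟨δ, hδ, hfar⟩ := hT.exists_pos_le_sub_of_forall_lt hh hmin hr
  obtain ⟨D, hD, hTD⟩ := hT.isBounded.subset_closedBall_lt 0 t₀
  refine ⟨min c (δ / D ^ 2), by positivity, fun t ht => ?_⟩
  rcases lt_or_ge ‖t - t₀‖ r with hlt | hge
  · calc min c (δ / D ^ 2) * ‖t - t₀‖ ^ 2 ≤ c * ‖t - t₀‖ ^ 2 := by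
          gcongr; exact min_le_left _ _
      _ ≤ h t - h t₀ := by simpa using hball (t - t₀) (by simpa using hlt)
  · have htD : ‖t - t₀‖ ≤ D := by simpa [dist_eq_norm] using hTD ht
    calc min c (δ / D ^ 2) * ‖t - t₀‖ ^ 2 ≤ δ / D ^ 2 * D ^ 2 := by
          gcongr; exact min_le_right _ _
      _ = δ := by field_simp
      _ ≤ h t - h t₀ := hfar t ht hge

end Growth

section Rescaling

variable {E : Type*} [NormedAddCommGroup E] [NormedSpace ℝ E] {h : E → ℝ} {t₀ : E}

theorem norm_inv_sqrt_smul_sq {u : ℝ} (hu : 0 ≤ u) (s : E) :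
    ‖(√u)⁻¹ • s‖ ^ 2 = u⁻¹ * ‖s‖ ^ 2 := by
  rw [norm_smul, mul_pow, norm_inv, Real.norm_eq_abs, abs_of_nonneg (Real.sqrt_nonneg u), inv_pow,
    Real.sq_sqrt hu]

theorem tendsto_inv_sqrt_smul_nhds_zero (s : E) :
    Tendsto (fun u : ℝ => (√u)⁻¹ • s) atTop (𝓝 0) := by
  simpa using (tendsto_inv_atTop_zero.comp Real.tendsto_sqrt_atTop).smul_const s

theorem tendsto_mul_sub_inv_sqrt_smul {B : E →L[ℝ] E →L[ℝ] ℝ}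
    (htaylor : (fun v => h (t₀ + v) - h t₀ - B v v / 2) =o[𝓝 0] fun v => ‖v‖ ^ 2) (s : E) :
    Tendsto (fun u => u * (h (t₀ + (√u)⁻¹ • s) - h t₀)) atTop (𝓝 (B s s / 2)) := by
  have hnorm : (fun u : ℝ => ‖(√u)⁻¹ • s‖ ^ 2) =O[atTop] fun u => u⁻¹ :=
    (isBigO_const_mul_self (‖s‖ ^ 2) _ _).congr'
      (eventually_ge_atTop 0 |>.mono fun u hu => by
        simp only [norm_inv_sqrt_smul_sq hu, mul_comm])
      EventuallyEq.rfl
  have hrem := ((htaylor.comp_tendsto (tendsto_inv_sqrt_smul_nhds_zero s)).trans_isBigO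
    hnorm).tendsto_div_nhds_zero
  refine (hrem.add_const (B s s / 2)).congr' ?_ |>.trans (by rw [zero_add])
  filter_upwards [eventually_gt_atTop 0] with u hu
  have hu' : u * (√u)⁻¹ ^ 2 = 1 := by
    rw [inv_pow, Real.sq_sqrt hu.le, mul_inv_cancel₀ hu.ne']
  simp only [Function.comp_apply, map_smul, _root_.smul_apply, smul_eq_mul,
    div_inv_eq_mul]
  linear_combination (-(B s s) / 2) * hu'

theorem norm_indicator_comp_add_inv_sqrt_smul_le {T : Set E} {g : E → ℝ} {M c u : ℝ}
    (hM : ∀ t ∈ T, ‖g t‖ ≤ M) (hM₀ : 0 ≤ M)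
    (hgrowth : ∀ t ∈ T, c * ‖t - t₀‖ ^ 2 ≤ h t - h t₀) (hu : 0 < u) (s : E) :
    ‖T.indicator (fun t => g t * Real.exp (-u * (h t - h t₀))) (t₀ + (√u)⁻¹ • s)‖ ≤
      M * Real.exp (-c * ‖s‖ ^ 2) := by
  by_cases hmem : t₀ + (√u)⁻¹ • s ∈ T
  · have hexp : -u * (h (t₀ + (√u)⁻¹ • s) - h t₀) ≤ -c * ‖s‖ ^ 2 := by
      have := hgrowth _ hmem
      rw [add_sub_cancel_left, norm_inv_sqrt_smul_sq hu.le] at this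
      have := mul_le_mul_of_nonneg_left this hu.le
      rw [mul_left_comm, mul_inv_cancel_left₀ hu.ne'] at this
      linarith
    rw [indicator_of_mem hmem, norm_mul, Real.norm_of_nonneg (Real.exp_pos _).le]
    exact mul_le_mul (hM _ hmem) (Real.exp_le_exp.2 hexp) (Real.exp_pos _).le hM₀
  · rw [indicator_of_notMem hmem, norm_zero]
    positivity

theorem tendsto_indicator_comp_add_inv_sqrt_smul {T : Set E} {g : E → ℝ} (hT : T ∈ 𝓝 t₀)
    (hg : ContinuousAt g t₀) {B : E →L[ℝ] E →L[ℝ] ℝ}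
    (htaylor : (fun v => h (t₀ + v) - h t₀ - B v v / 2) =o[𝓝 0] fun v => ‖v‖ ^ 2) (s : E) :
    Tendsto (fun u => T.indicator (fun t => g t * Real.exp (-u * (h t - h t₀))) (t₀ + (√u)⁻¹ • s))
      atTop (𝓝 (g t₀ * Real.exp (-(B s s) / 2))) := by
  have hpt : Tendsto (fun u : ℝ => t₀ + (√u)⁻¹ • s) atTop (𝓝 t₀) := by
    simpa using (tendsto_inv_sqrt_smul_nhds_zero s).const_add t₀
  rw [neg_div]
  refine (hg.tendsto.comp hpt |>.mul ((Real.continuous_exp.tendsto _).comp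
    (tendsto_mul_sub_inv_sqrt_smul htaylor s).neg)).congr' ?_
  filter_upwards [hpt.eventually hT] with u hu
  simp [indicator_of_mem hu]

variable [FiniteDimensional ℝ E] [MeasurableSpace E] [BorelSpace E]

theorem integral_comp_add_inv_sqrt_smul (μ : Measure E) [μ.IsAddHaarMeasure] {F : Type*}
    [NormedAddCommGroup F] [NormedSpace ℝ F] (f : E → F) (t₀ : E) {u : ℝ} (hu : 0 < u) :
    ∫ s, f (t₀ + (√u)⁻¹ • s) ∂μ = u ^ (finrank ℝ E / 2 : ℝ) • ∫ t, f t ∂μ := by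
  rw [Measure.integral_comp_smul μ (fun s => f (t₀ + s)), integral_add_left_eq_self, inv_pow,
    inv_inv, abs_of_nonneg (by positivity), Real.sqrt_eq_rpow, ← Real.rpow_natCast,
    ← Real.rpow_mul hu.le, one_div_mul_eq_div]

end Rescaling

section Laplace

variable {E : Type*} [NormedAddCommGroup E] [InnerProductSpace ℝ E] [FiniteDimensional ℝ E]
  [MeasurableSpace E] [BorelSpace E] {T : Set E} {t₀ : E} {g h : E → ℝ}
  {B : E →L[ℝ] E →L[ℝ] ℝ}

theorem integrable_exp_neg_mul_norm_sq {c : ℝ} (hc : 0 < c) :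
    Integrable fun s : E => Real.exp (-c * ‖s‖ ^ 2) :=
  .of_integral_ne_zero <| by
    rw [GaussianFourier.integral_rexp_neg_mul_sq_norm hc]
    exact (Real.rpow_pos_of_pos (div_pos Real.pi_pos hc) _).ne'

theorem tendsto_rpow_mul_setIntegral_exp_neg_mul (hT : IsCompact T) (ht₀ : t₀ ∈ interior T)
    (hg : ContinuousOn g T) (hh : ContinuousOn h T) (hmin : ∀ t ∈ T, t ≠ t₀ → h t₀ < h t)
    (hB : IsCoercive B)
    (htaylor : (fun v => h (t₀ + v) - h t₀ - B v v / 2) =o[𝓝 0] fun v => ‖v‖ ^ 2) :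
    Tendsto (fun u : ℝ =>
        u ^ (finrank ℝ E / 2 : ℝ) * ∫ t in T, g t * Real.exp (-u * (h t - h t₀)))
      atTop (𝓝 (g t₀ * ∫ s, Real.exp (-(B s s) / 2))) := by
  have hTt₀ : T ∈ 𝓝 t₀ := mem_interior_iff_mem_nhds.1 ht₀
  obtain ⟨c, hc, hgrowth⟩ := hT.exists_pos_mul_norm_sub_sq_le hh hmin hB htaylor
  obtain ⟨M, hM⟩ := hT.exists_bound_of_continuousOn hg
  have hM₀ : 0 ≤ M := (norm_nonneg _).trans (hM t₀ (mem_of_mem_nhds hTt₀))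
  have hmeas : ∀ u > 0, AEStronglyMeasurable fun s =>
      T.indicator (fun t => g t * Real.exp (-u * (h t - h t₀))) (t₀ + (√u)⁻¹ • s) := by
    intro u hu
    have hcont : ContinuousOn (fun t => g t * Real.exp (-u * (h t - h t₀))) T :=
      hg.mul (Real.continuous_exp.comp_continuousOn (continuousOn_const.mul
        (hh.sub continuousOn_const)))
    exact ((aestronglyMeasurable_indicator_iff hT.measurableSet).2
      (hcont.aestronglyMeasurable hT.measurableSet)).comp_quasiMeasurePreserving
      ((measurePreserving_add_left volume t₀).quasiMeasurePreserving.comp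
        (Measure.quasiMeasurePreserving_smul volume (by positivity)))
  have hdom := tendsto_integral_filter_of_dominated_convergence
    (fun s => M * Real.exp (-c * ‖s‖ ^ 2)) (eventually_gt_atTop 0 |>.mono hmeas)
    (eventually_gt_atTop 0 |>.mono fun u hu =>
      .of_forall (norm_indicator_comp_add_inv_sqrt_smul_le hM hM₀ hgrowth hu))
    ((integrable_exp_neg_mul_norm_sq hc).const_mul M)
    (.of_forall (tendsto_indicator_comp_add_inv_sqrt_smul hTt₀ (hg.continuousAt hTt₀) htaylor))
  rw [← integral_const_mul]
  refine hdom.congr' (eventually_gt_atTop 0 |>.mono fun u hu => ?_)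
  rw [integral_comp_add_inv_sqrt_smul volume _ t₀ hu, integral_indicator hT.measurableSet,
    smul_eq_mul]

theorem IsCoercive.integrable_exp_neg_apply_self_div_two (hB : IsCoercive B) :
    Integrable fun s => Real.exp (-(B s s) / 2) := by
  obtain ⟨C, hC, hCB⟩ := hB
  refine (integrable_exp_neg_mul_norm_sq (half_pos hC)).mono' (by fun_prop)
    (.of_forall fun s => ?_)
  rw [Real.norm_of_nonneg (Real.exp_pos _).le, Real.exp_le_exp]
  nlinarith [hCB s]

theorem isEquivalent_setIntegral_exp_neg_mul (hT : IsCompact T) (ht₀ : t₀ ∈ interior T)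
    (hg : ContinuousOn g T) (hg₀ : g t₀ ≠ 0) (hh : ContinuousOn h T)
    (hmin : ∀ t ∈ T, t ≠ t₀ → h t₀ < h t) (hB : IsCoercive B)
    (htaylor : (fun v => h (t₀ + v) - h t₀ - B v v / 2) =o[𝓝 0] fun v => ‖v‖ ^ 2) :
    (fun u : ℝ => ∫ t in T, g t * Real.exp (-u * h t)) ~[atTop] fun u =>
      u ^ (-(finrank ℝ E : ℝ) / 2) * (g t₀ * ∫ s, Real.exp (-(B s s) / 2)) *
        Real.exp (-u * h t₀) := by
  have hgauss : 0 < ∫ s, Real.exp (-(B s s) / 2) :=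
    integral_exp_pos hB.integrable_exp_neg_apply_self_div_two
  have hrescaled := (isEquivalent_const_iff_tendsto (mul_ne_zero hg₀ hgauss.ne')).2
    (tendsto_rpow_mul_setIntegral_exp_neg_mul hT ht₀ hg hh hmin hB htaylor)
  refine (((IsEquivalent.refl (u := fun u : ℝ => u ^ (-(finrank ℝ E : ℝ) / 2))).mul
    hrescaled).mul (IsEquivalent.refl (u := fun u : ℝ => Real.exp (-u * h t₀)))).congr_left ?_
  filter_upwards [eventually_gt_atTop 0] with u hu
  rw [Pi.mul_apply, Pi.mul_apply, ← mul_assoc, ← Real.rpow_add hu, neg_div, neg_add_cancel,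
    Real.rpow_zero, one_mul, ← integral_mul_const]
  congr with t
  rw [mul_assoc, ← Real.exp_add]
  ring_nf

end Laplace

open scoped MatrixOrder in
theorem integral_exp_neg_dotProduct_mulVec_div_two {ι : Type*} [Fintype ι] [DecidableEq ι]
    {H : Matrix ι ι ℝ} (hH : H.PosDef) :
    ∫ v : EuclideanSpace ℝ ι, Real.exp (-(ofLp v ⬝ᵥ H *ᵥ ofLp v) / 2) =
      (2 * Real.pi) ^ ((Fintype.card ι : ℝ) / 2) * H.det ^ (-(1 : ℝ) / 2) := by
  obtain ⟨A, hA, rfl⟩ :=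
    CStarAlgebra.isStrictlyPositive_iff_eq_star_mul_self.mp hH.isStrictlyPositive
  have hdetL : LinearMap.det (toEuclideanLin A) = A.det := by
    rw [Matrix.toEuclideanLin_eq_toLin_orthonormal, LinearMap.det_toLin]
  set L := Matrix.toEuclideanLin A
  have hquad : ∀ v, ofLp v ⬝ᵥ (star A * A) *ᵥ ofLp v = ‖L v‖ ^ 2 := by
    intro v
    rw [star_eq_conjTranspose, conjTranspose_eq_transpose_of_trivial, ← mulVec_mulVec,
      dotProduct_mulVec, vecMul_transpose, ← real_inner_self_eq_norm_sq,
      EuclideanSpace.inner_eq_star_dotProduct, star_trivial]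
    rfl
  have hdet : (star A * A).det = A.det ^ 2 := by
    rw [det_mul, star_eq_conjTranspose, det_conjTranspose, star_trivial, sq]
  have hA0 : A.det ≠ 0 := (Matrix.isUnit_iff_isUnit_det A).1 hA |>.ne_zero
  have hmap := Measure.map_linearMap_addHaar_eq_smul_addHaar
    (volume : Measure (EuclideanSpace ℝ ι)) (hdetL ▸ hA0)
  calc ∫ v : EuclideanSpace ℝ ι, Real.exp (-(ofLp v ⬝ᵥ (star A * A) *ᵥ ofLp v) / 2)
      = ∫ v, Real.exp (-(1 / 2) * ‖v‖ ^ 2) ∂(Measure.map L volume) := by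
        rw [integral_map L.continuous_of_finiteDimensional.aemeasurable (by fun_prop)]
        congr with v
        rw [hquad]
        ring_nf
    _ = |A.det|⁻¹ * (2 * Real.pi) ^ ((Fintype.card ι : ℝ) / 2) := by
        rw [hmap, integral_smul_measure,
          GaussianFourier.integral_rexp_neg_mul_sq_norm (by norm_num),
          ENNReal.toReal_ofReal (abs_nonneg _), hdetL, finrank_euclideanSpace, abs_inv]
        norm_num [div_div_eq_mul_div, mul_comm]
    _ = _ := by
        rw [hdet, neg_div, Real.rpow_neg (sq_nonneg _), ← Real.sqrt_eq_rpow, Real.sqrt_sq_eq_abs,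
          mul_comm]

theorem ContinuousLinearMap.apply_apply_eq_dotProduct_mulVec {ι : Type*} [Fintype ι]
    [DecidableEq ι] (B : EuclideanSpace ℝ ι →L[ℝ] EuclideanSpace ℝ ι →L[ℝ] ℝ)
    (v w : EuclideanSpace ℝ ι) :
    B v w = ofLp v ⬝ᵥ
      of (fun i j => B (EuclideanSpace.single i 1) (EuclideanSpace.single j 1)) *ᵥ ofLp w := by
  conv_lhs => rw [← (EuclideanSpace.basisFun ι ℝ).sum_repr v,
    ← (EuclideanSpace.basisFun ι ℝ).sum_repr w]
  simp only [map_sum, map_smul, _root_.sum_apply, _root_.smul_apply,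
    EuclideanSpace.basisFun_apply, EuclideanSpace.basisFun_repr, smul_eq_mul, dotProduct, mulVec,
    of_apply, Finset.mul_sum]
  rw [Finset.sum_comm]
  simp only [mul_comm, mul_left_comm]

theorem fderiv_fderiv_apply_eq_dotProduct_mulVec {ι : Type*} [Fintype ι] [DecidableEq ι]
    {h : EuclideanSpace ℝ ι → ℝ} {t₀ : EuclideanSpace ℝ ι} {H : Matrix ι ι ℝ}
    (hH : ∀ i j, H i j = fderiv ℝ (fun t => fderiv ℝ h t (EuclideanSpace.single j (1 : ℝ))) t₀
      (EuclideanSpace.single i (1 : ℝ)))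
    {f'' : EuclideanSpace ℝ ι →L[ℝ] EuclideanSpace ℝ ι →L[ℝ] ℝ}
    (hf'' : HasFDerivAt (fderiv ℝ h) f'' t₀) (v w : EuclideanSpace ℝ ι) :
    f'' v w = ofLp v ⬝ᵥ H *ᵥ ofLp w := by
  suffices H = of fun i j => f'' (EuclideanSpace.single i 1) (EuclideanSpace.single j 1) by
    rw [this]
    exact f''.apply_apply_eq_dotProduct_mulVec v w
  ext i j
  have hj : HasFDerivAt (fun t => fderiv ℝ h t (EuclideanSpace.single j 1))
      ((ContinuousLinearMap.apply ℝ ℝ (EuclideanSpace.single j 1)).comp f'') t₀ :=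
    (ContinuousLinearMap.apply ℝ ℝ (EuclideanSpace.single j (1 : ℝ))).hasFDerivAt.comp t₀ hf''
  rw [hH, hj.fderiv, of_apply]
  rfl

/-- Laplace method for an interior minimum point: if `h` attains its unique minimum over
the compact set `T` at the interior point `t₀` with `∇h(t₀) = 0` and positive definite
Hessian `H`, and `g` is continuous with `g(t₀) ≠ 0`, then as `u → ∞`,
`∫_T g e^{-u h} = (2π)^{N/2} u^{-N/2} (det H)^{-1/2} g(t₀) e^{-u h(t₀)} (1 + o(1))`. -/
theorem laplace_method_interior (N : ℕ)
    (T : Set (EuclideanSpace ℝ (Fin N))) (hT : IsCompact T)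
    (t₀ : EuclideanSpace ℝ (Fin N)) (ht₀ : t₀ ∈ interior T)
    (g h : EuclideanSpace ℝ (Fin N) → ℝ)
    (hg : ContinuousOn g T) (hg0 : g t₀ ≠ 0)
    (hh : ContDiffOn ℝ 2 h T)
    (hmin : ∀ t ∈ T, t ≠ t₀ → h t₀ < h t)
    (hgrad : fderiv ℝ h t₀ = 0)
    (H : Matrix (Fin N) (Fin N) ℝ)
    (hH : ∀ i j, H i j =
      fderiv ℝ (fun t => fderiv ℝ h t (EuclideanSpace.single j (1 : ℝ))) t₀
        (EuclideanSpace.single i (1 : ℝ)))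
    (hHpd : H.PosDef) :
    (fun u : ℝ => ∫ t in T, g t * Real.exp (-u * h t)) ~[atTop]
      fun u : ℝ => (2 * Real.pi) ^ ((N : ℝ) / 2) * u ^ (-(N : ℝ) / 2) *
        H.det ^ (-(1 : ℝ) / 2) * g t₀ * Real.exp (-u * h t₀) := by
  have hC2 : ContDiffAt ℝ 2 h t₀ := hh.contDiffAt (mem_interior_iff_mem_nhds.1 ht₀)
  have hf' : ∀ᶠ y in 𝓝 t₀, HasFDerivAt h (fderiv ℝ h y) y :=
    (hC2.eventually (by simp)).mono fun y hy => (hy.differentiableAt (by simp)).hasFDerivAt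
  have hf'' : HasFDerivAt (fderiv ℝ h) (fderiv ℝ (fderiv ℝ h) t₀) t₀ :=
    ((hC2.fderiv_right (m := 1) le_rfl).differentiableAt one_ne_zero).hasFDerivAt
  have hBH := fderiv_fderiv_apply_eq_dotProduct_mulVec hH hf''
  have hB : IsCoercive (fderiv ℝ (fderiv ℝ h) t₀) :=
    isCoercive_of_pos _ fun v hv => by
      simpa [hBH] using hHpd.dotProduct_mulVec_pos (by simpa using hv)
  have htaylor : (fun v => h (t₀ + v) - h t₀ - fderiv ℝ (fderiv ℝ h) t₀ v v / 2) =o[𝓝 0]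
      fun v => ‖v‖ ^ 2 := by
    simpa [hgrad, div_eq_inv_mul] using isLittleO_sub_taylor_two hf' hf''
  have := isEquivalent_setIntegral_exp_neg_mul hT ht₀ hg hg0 hh.continuousOn hmin hB htaylor
  simp_rw [hBH, integral_exp_neg_dotProduct_mulVec_div_two hHpd, finrank_euclideanSpace,
    Fintype.card_fin] at this
  exact this.congr_right (.of_forall fun u => by ring)
end

section
/- For the cosine-based field X(t) = ξ₀ + Z(t) − Z(0) on R², the conditional variance τ(t) = Var(X(t) | X₁(t), X₂(t)) equals 3 − cos t₁ − cos t₂ − (1/2) sin² t₁ − (1/2) sin² t₂, and its Hessian at t* = (π, π) is −2 I₂. -/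
open MeasureTheory ProbabilityTheory Matrix

/-- First partial derivative in the first variable. -/
noncomputable def pd1 (f : ℝ × ℝ → ℝ) (t : ℝ × ℝ) : ℝ := deriv (fun a => f (a, t.2)) t.1

/-- First partial derivative in the second variable. -/
noncomputable def pd2 (f : ℝ × ℝ → ℝ) (t : ℝ × ℝ) : ℝ := deriv (fun b => f (t.1, b)) t.2

/-!
`X(t)` and its two partial derivatives are linear combinations of the five independent standard
Gaussians `ξ i`, with coefficient vectors `a(t)`, `∂₁a(t)`, `∂₂a(t)`, so every covariance in the
regression formula is a dot product of coefficient vectors. The gradient coefficients are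
orthogonal of squared length `1/2`, and `a(t) ⬝ ∂ᵢa(t) = sin tᵢ / 2`, which gives
`τ(t) = |a(t)|² - 2 (sin² t₁ + sin² t₂) / 4`. This splits as `h(t₁) + h(t₂)`, so the Hessian
is diagonal with entries `h''(π) = cos π - cos 2π = -2`.
-/

open Real

section GaussianMoments

variable {Ω : Type*} {mΩ : MeasurableSpace Ω} {P : Measure Ω} {X : Ω → ℝ}

lemma ProbabilityTheory.HasLaw.memLp_two_of_gaussianReal (h : HasLaw X (gaussianReal 0 1) P) :
    MemLp X 2 P := by
  have := memLp_id_gaussianReal' (μ := 0) (v := 1) 2 ENNReal.ofNat_ne_top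
  rwa [← h.map_eq, memLp_map_measure_iff aestronglyMeasurable_id h.aemeasurable] at this

lemma ProbabilityTheory.HasLaw.integral_eq_zero_of_gaussianReal
    (h : HasLaw X (gaussianReal 0 1) P) : ∫ ω, X ω ∂P = 0 :=
  h.integral_eq.trans integral_id_gaussianReal

lemma ProbabilityTheory.HasLaw.integral_sq_eq_one_of_gaussianReal
    (h : HasLaw X (gaussianReal 0 1) P) : ∫ ω, X ω ^ 2 ∂P = 1 := by
  rw [← variance_of_integral_eq_zero h.aemeasurable h.integral_eq_zero_of_gaussianReal,
    h.variance_eq, variance_id_gaussianReal, NNReal.coe_one]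

end GaussianMoments

section Orthonormal

variable {Ω ι : Type*} {mΩ : MeasurableSpace Ω} {P : Measure Ω} {ξ : ι → Ω → ℝ}
  [DecidableEq ι]

lemma integral_mul_eq_ite_of_iIndepFun (hL2 : ∀ i, MemLp (ξ i) 2 P) (hindep : iIndepFun ξ P)
    (hmean : ∀ i, ∫ ω, ξ i ω ∂P = 0) (hsq : ∀ i, ∫ ω, ξ i ω ^ 2 ∂P = 1) (i j : ι) :
    ∫ ω, ξ i ω * ξ j ω ∂P = if i = j then 1 else 0 := by
  rcases eq_or_ne i j with rfl | hij
  · simpa [← sq] using hsq i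
  · rw [if_neg hij, (hindep.indepFun hij).integral_fun_mul_eq_mul_integral
      (hL2 i).aestronglyMeasurable (hL2 j).aestronglyMeasurable, hmean i, zero_mul]

lemma integral_dotProduct_mul_dotProduct [Fintype ι] (hL2 : ∀ i, MemLp (ξ i) 2 P)
    (horth : ∀ i j, ∫ ω, ξ i ω * ξ j ω ∂P = if i = j then 1 else 0) (a b : ι → ℝ) :
    ∫ ω, (a ⬝ᵥ fun i => ξ i ω) * (b ⬝ᵥ fun i => ξ i ω) ∂P = a ⬝ᵥ b := by
  have hint (i j : ι) : Integrable (fun ω => a i * b j * (ξ i ω * ξ j ω)) P :=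
    ((hL2 i).integrable_mul (hL2 j)).const_mul _
  have hexpand (ω : Ω) : (a ⬝ᵥ fun i => ξ i ω) * (b ⬝ᵥ fun i => ξ i ω) =
      ∑ i, ∑ j, a i * b j * (ξ i ω * ξ j ω) := by
    simp only [dotProduct, Finset.sum_mul_sum]
    exact Finset.sum_congr rfl fun i _ => Finset.sum_congr rfl fun j _ => mul_mul_mul_comm ..
  simp_rw [hexpand]
  rw [integral_finsetSum _ fun i _ => integrable_finsetSum _ fun j _ => hint i j]
  simp_rw [integral_finsetSum _ fun j _ => hint _ j, integral_const_mul, horth]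
  simp [dotProduct]

end Orthonormal

lemma dotProduct_smul_one_inv_mulVec {K n : Type*} [Field K] [Fintype n] [DecidableEq n]
    (c : K) (v : n → K) :
    v ⬝ᵥ ((c • 1 : Matrix n n K)⁻¹ *ᵥ v) = (v ⬝ᵥ v) / c := by
  rcases eq_or_ne c 0 with rfl | hc
  · simp
  have hinv : (c • 1 : Matrix n n K)⁻¹ = c⁻¹ • 1 :=
    Matrix.inv_eq_right_inv (by rw [smul_mul_smul, mul_one, mul_inv_cancel₀ hc, one_smul])
  rw [hinv, smul_mulVec, one_mulVec, dotProduct_smul, smul_eq_mul, div_eq_inv_mul]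

section PartialDerivatives

variable {ι : Type*} [Fintype ι] {c : ℝ × ℝ → ι → ℝ} {c' : ι → ℝ} {t : ℝ × ℝ}

lemma pd1_dotProduct (hc : HasDerivAt (fun a => c (a, t.2)) c' t.1) (v : ι → ℝ) :
    pd1 (fun s => c s ⬝ᵥ v) t = c' ⬝ᵥ v :=
  (HasDerivAt.fun_sum fun i _ => (hasDerivAt_pi.1 hc i).mul_const (v i)).deriv

lemma pd2_dotProduct (hc : HasDerivAt (fun b => c (t.1, b)) c' t.2) (v : ι → ℝ) :
    pd2 (fun s => c s ⬝ᵥ v) t = c' ⬝ᵥ v :=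
  (HasDerivAt.fun_sum fun i _ => (hasDerivAt_pi.1 hc i).mul_const (v i)).deriv

variable (f g : ℝ → ℝ)

lemma pd1_fst_add_snd : pd1 (fun s => f s.1 + g s.2) = fun s => deriv f s.1 :=
  funext fun s => deriv_add_const (f := f) (x := s.1) (g s.2)

lemma pd2_fst_add_snd : pd2 (fun s => f s.1 + g s.2) = fun s => deriv g s.2 :=
  funext fun s => deriv_const_add (f := g) (x := s.2) (f s.1)

lemma pd2_fst : pd2 (fun s => f s.1) = 0 :=
  funext fun s => deriv_const s.2 (f s.1)

lemma pd1_snd : pd1 (fun s => g s.2) = 0 :=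
  funext fun s => deriv_const s.1 (g s.2)

end PartialDerivatives

section CosineField

noncomputable def cosineFieldCoeff (t : ℝ × ℝ) : Fin 5 → ℝ :=
  ![(cos t.1 - 1) / √2, sin t.1 / √2, (cos t.2 - 1) / √2, sin t.2 / √2, 1]

noncomputable def cosineFieldGradCoeff (t : ℝ × ℝ) : Fin 2 → Fin 5 → ℝ :=
  ![![-sin t.1 / √2, cos t.1 / √2, 0, 0, 0], ![0, 0, -sin t.2 / √2, cos t.2 / √2, 0]]

noncomputable def cosineFieldVarianceSummand (x : ℝ) : ℝ :=
  3 / 2 - cos x - sin x ^ 2 / 2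

lemma hasDerivAt_cosineFieldCoeff_fst (t : ℝ × ℝ) :
    HasDerivAt (fun a => cosineFieldCoeff (a, t.2)) (cosineFieldGradCoeff t 0) t.1 := by
  refine hasDerivAt_pi.2 fun i => ?_
  fin_cases i
  · simpa [cosineFieldCoeff, cosineFieldGradCoeff, neg_div] using
      ((hasDerivAt_cos t.1).sub_const 1).div_const √2
  · simpa [cosineFieldCoeff, cosineFieldGradCoeff] using (hasDerivAt_sin t.1).div_const √2
  all_goals simpa [cosineFieldCoeff, cosineFieldGradCoeff] using hasDerivAt_const _ _

lemma hasDerivAt_cosineFieldCoeff_snd (t : ℝ × ℝ) :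
    HasDerivAt (fun b => cosineFieldCoeff (t.1, b)) (cosineFieldGradCoeff t 1) t.2 := by
  refine hasDerivAt_pi.2 fun i => ?_
  fin_cases i
  · simpa [cosineFieldCoeff, cosineFieldGradCoeff] using hasDerivAt_const _ _
  · simpa [cosineFieldCoeff, cosineFieldGradCoeff] using hasDerivAt_const _ _
  · simpa [cosineFieldCoeff, cosineFieldGradCoeff, neg_div] using
      ((hasDerivAt_cos t.2).sub_const 1).div_const √2
  · simpa [cosineFieldCoeff, cosineFieldGradCoeff] using (hasDerivAt_sin t.2).div_const √2
  · simpa [cosineFieldCoeff, cosineFieldGradCoeff] using hasDerivAt_const _ _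

lemma cosineFieldCoeff_dotProduct_self (t : ℝ × ℝ) :
    cosineFieldCoeff t ⬝ᵥ cosineFieldCoeff t = 3 - cos t.1 - cos t.2 := by
  simp only [dotProduct, cosineFieldCoeff, Fin.sum_univ_five, Fin.isValue, cons_val_zero,
    cons_val_one, cons_val, mul_one]
  field_simp
  rw [sq_sqrt zero_le_two]
  linear_combination sin_sq_add_cos_sq t.1 + sin_sq_add_cos_sq t.2

lemma cosineFieldCoeff_dotProduct_gradCoeff (t : ℝ × ℝ) :
    (fun i => cosineFieldCoeff t ⬝ᵥ cosineFieldGradCoeff t i) = ![sin t.1 / 2, sin t.2 / 2] := by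
  ext i
  fin_cases i <;>
    simp only [dotProduct, cosineFieldCoeff, cosineFieldGradCoeff, Fin.sum_univ_five, Fin.zero_eta,
      Fin.mk_one, Fin.isValue, cons_val', cons_val_fin_one, cons_val_zero, cons_val_one, cons_val,
      mul_zero, add_zero, zero_add] <;>
    field_simp <;> rw [sq_sqrt zero_le_two] <;> ring

lemma gram_cosineFieldGradCoeff (t : ℝ × ℝ) :
    (of fun i j => cosineFieldGradCoeff t i ⬝ᵥ cosineFieldGradCoeff t j) = (2⁻¹ : ℝ) • 1 := by
  ext i j
  fin_cases i <;> fin_cases j <;>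
    simp only [dotProduct, cosineFieldGradCoeff, Fin.sum_univ_five, Fin.zero_eta, Fin.mk_one,
      Fin.isValue, cons_val', cons_val_fin_one, cons_val_zero, cons_val_one, cons_val, of_apply,
      mul_zero, zero_mul, add_zero, zero_add, Matrix.smul_apply, smul_eq_mul, one_apply_eq,
      one_apply_ne zero_ne_one, one_apply_ne one_ne_zero, mul_one]
  all_goals field_simp; rw [sq_sqrt zero_le_two]; linear_combination 2 * sin_sq_add_cos_sq _

lemma deriv_deriv_cosineFieldVarianceSummand_pi :
    deriv (deriv cosineFieldVarianceSummand) π = -2 := by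
  have hderiv : deriv cosineFieldVarianceSummand = fun x => sin x - sin x * cos x := by
    funext x
    refine (((hasDerivAt_cos x).const_sub _).sub
      (((hasDerivAt_sin x).pow 2).div_const 2)).deriv.trans ?_
    ring
  rw [hderiv, ((hasDerivAt_sin π).fun_sub ((hasDerivAt_sin π).fun_mul (hasDerivAt_cos π))).deriv]
  norm_num

end CosineField

theorem cosine_field_conditional_variance_general
    {Ω : Type*} [MeasurableSpace Ω] (P : Measure Ω)
    (ξ : Fin 5 → Ω → ℝ) (hmeas : ∀ i, Measurable (ξ i))
    (hindep : iIndepFun ξ P)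
    (hgauss : ∀ i, Measure.map (ξ i) P = gaussianReal 0 1)
    (Z : ℝ × ℝ → Ω → ℝ)
    (hZ : ∀ t ω, Z t ω = (1 / Real.sqrt 2) *
      (ξ 0 ω * Real.cos t.1 + ξ 1 ω * Real.sin t.1 +
        ξ 2 ω * Real.cos t.2 + ξ 3 ω * Real.sin t.2))
    (X : ℝ × ℝ → Ω → ℝ)
    (hX : ∀ t ω, X t ω = ξ 4 ω + Z t ω - Z (0, 0) ω)
    (D : Fin 2 → (ℝ × ℝ) → Ω → ℝ)
    (hD0 : ∀ t ω, D 0 t ω = pd1 (fun s => X s ω) t)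
    (hD1 : ∀ t ω, D 1 t ω = pd2 (fun s => X s ω) t)
    (τ : ℝ × ℝ → ℝ)
    (hτ : ∀ t, τ t = (∫ ω, X t ω ^ 2 ∂P) -
      dotProduct (fun i => ∫ ω, X t ω * D i t ω ∂P)
        ((Matrix.of fun i j : Fin 2 => ∫ ω, D i t ω * D j t ω ∂P)⁻¹ *ᵥ
          fun i => ∫ ω, X t ω * D i t ω ∂P)) :
    (∀ t : ℝ × ℝ, τ t = 3 - Real.cos t.1 - Real.cos t.2
        - (1 / 2) * Real.sin t.1 ^ 2 - (1 / 2) * Real.sin t.2 ^ 2) ∧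
      pd1 (pd1 τ) (Real.pi, Real.pi) = -2 ∧
      pd2 (pd2 τ) (Real.pi, Real.pi) = -2 ∧
      pd1 (pd2 τ) (Real.pi, Real.pi) = 0 ∧
      pd2 (pd1 τ) (Real.pi, Real.pi) = 0 := by
  have hlaw (i : Fin 5) : HasLaw (ξ i) (gaussianReal 0 1) P := ⟨(hmeas i).aemeasurable, hgauss i⟩
  have hL2 (i : Fin 5) : MemLp (ξ i) 2 P := (hlaw i).memLp_two_of_gaussianReal
  have horth := integral_mul_eq_ite_of_iIndepFun hL2 hindep
    (fun i => (hlaw i).integral_eq_zero_of_gaussianReal)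
    (fun i => (hlaw i).integral_sq_eq_one_of_gaussianReal)
  have hXcoeff (t : ℝ × ℝ) (ω : Ω) : X t ω = cosineFieldCoeff t ⬝ᵥ fun i => ξ i ω := by
    simp only [hX, hZ, one_div, cos_zero, sin_zero, mul_one, mul_zero, add_zero, one_mul,
      dotProduct, cosineFieldCoeff, Fin.sum_univ_five, Fin.isValue, cons_val_zero,
      cons_val_one, cons_val]
    ring
  have hDcoeff : ∀ i t ω, D i t ω = cosineFieldGradCoeff t i ⬝ᵥ fun i => ξ i ω := by
    refine Fin.forall_fin_two.2 ⟨fun t ω => ?_, fun t ω => ?_⟩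
    · rw [hD0, funext (hXcoeff · ω)]
      exact pd1_dotProduct (hasDerivAt_cosineFieldCoeff_fst t) _
    · rw [hD1, funext (hXcoeff · ω)]
      exact pd2_dotProduct (hasDerivAt_cosineFieldCoeff_snd t) _
  have hτ_eq : τ = fun t => cosineFieldVarianceSummand t.1 + cosineFieldVarianceSummand t.2 := by
    ext t
    simp_rw [hτ, sq, hXcoeff, hDcoeff, integral_dotProduct_mul_dotProduct hL2 horth,
      cosineFieldCoeff_dotProduct_self, cosineFieldCoeff_dotProduct_gradCoeff,
      gram_cosineFieldGradCoeff, dotProduct_smul_one_inv_mulVec]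
    simp only [dotProduct, Fin.sum_univ_two, Fin.isValue, cons_val_zero, cons_val_one,
      cosineFieldVarianceSummand]
    ring
  refine ⟨fun t => ?_, ?_, ?_, ?_, ?_⟩
  · simp only [hτ_eq, cosineFieldVarianceSummand]
    ring
  · rw [hτ_eq, pd1_fst_add_snd]
    exact deriv_deriv_cosineFieldVarianceSummand_pi
  · rw [hτ_eq, pd2_fst_add_snd]
    exact deriv_deriv_cosineFieldVarianceSummand_pi
  · rw [hτ_eq, pd2_fst_add_snd, pd1_snd]
    rfl
  · rw [hτ_eq, pd1_fst_add_snd, pd2_fst]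
    rfl

/-- For the cosine-based field `X(t) = ξ₀ + Z(t) − Z(0)` on `ℝ²`, the conditional
variance `τ(t) = Var(X(t) | X₁(t), X₂(t))` (given by the Gaussian regression formula)
equals `3 − cos t₁ − cos t₂ − (1/2) sin²t₁ − (1/2) sin²t₂`, and its Hessian at
`t* = (π, π)` is `−2I₂`. -/
theorem cosine_field_conditional_variance
    {Ω : Type*} [MeasurableSpace Ω] (P : Measure Ω) [IsProbabilityMeasure P]
    (ξ : Fin 5 → Ω → ℝ) (hmeas : ∀ i, Measurable (ξ i))
    (hindep : iIndepFun ξ P)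
    (hgauss : ∀ i, Measure.map (ξ i) P = gaussianReal 0 1)
    (Z : ℝ × ℝ → Ω → ℝ)
    (hZ : ∀ t ω, Z t ω = (1 / Real.sqrt 2) *
      (ξ 0 ω * Real.cos t.1 + ξ 1 ω * Real.sin t.1 +
        ξ 2 ω * Real.cos t.2 + ξ 3 ω * Real.sin t.2))
    (X : ℝ × ℝ → Ω → ℝ)
    (hX : ∀ t ω, X t ω = ξ 4 ω + Z t ω - Z (0, 0) ω)
    (D : Fin 2 → (ℝ × ℝ) → Ω → ℝ)
    (hD0 : ∀ t ω, D 0 t ω = pd1 (fun s => X s ω) t)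
    (hD1 : ∀ t ω, D 1 t ω = pd2 (fun s => X s ω) t)
    (τ : ℝ × ℝ → ℝ)
    (hτ : ∀ t, τ t = (∫ ω, X t ω ^ 2 ∂P) -
      dotProduct (fun i => ∫ ω, X t ω * D i t ω ∂P)
        ((Matrix.of fun i j : Fin 2 => ∫ ω, D i t ω * D j t ω ∂P)⁻¹ *ᵥ
          fun i => ∫ ω, X t ω * D i t ω ∂P)) :
    (∀ t : ℝ × ℝ, τ t = 3 - Real.cos t.1 - Real.cos t.2
        - (1 / 2) * Real.sin t.1 ^ 2 - (1 / 2) * Real.sin t.2 ^ 2) ∧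
      pd1 (pd1 τ) (Real.pi, Real.pi) = -2 ∧
      pd2 (pd2 τ) (Real.pi, Real.pi) = -2 ∧
      pd1 (pd2 τ) (Real.pi, Real.pi) = 0 ∧
      pd2 (pd1 τ) (Real.pi, Real.pi) = 0 :=
  cosine_field_conditional_variance_general P ξ hmeas hindep hgauss Z hZ X hX D hD0 hD1 τ hτ
end
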